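/- For all integers ℓ ≥ 1 and q ≥ 0 the following holds. Let x = (x_e)_{e ∈ E_{ℓ,q}} and let x' = (x'_e)_{e ∈ E'_{ℓ,q}} agree with x on E_{ℓ,q} and have x'_e = 1 for every new edge e ∈ E'_{ℓ,q}∖E_{ℓ,q}. If x' ∈ ST(G'_{ℓ,q}), then x ∈ SP(G_{ℓ,q}, s, t). -/

import Mathlib

open Finset

namespace TSPGap


/-! ### Lovász–Schrijver lift-and-project operators -/

/-- `cone(R) = {(λ, λx) : λ ≥ 0, x ∈ R}`, with the extra 0th coordinate first. -/
def lsCone {ι : Type*} (R : Set (ι → ℝ)) : Set (ℝ × (ι → ℝ)) :=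
  {p | ∃ c : ℝ, ∃ y ∈ R, 0 ≤ c ∧ p.1 = c ∧ p.2 = fun i => c * y i}

/-- `X` is a protection matrix witnessing `x ∈ N(R)`: it is symmetric, its 0th row and
diagonal both equal `(1, x)`, and each row `X_i` and difference `X_0 - X_i` lies in `cone(R)`. -/
def IsProtection {ι : Type*} (R : Set (ι → ℝ)) (x : ι → ℝ)
    (X : Option ι → Option ι → ℝ) : Prop :=
  (∀ i j, X i j = X j i) ∧
  X none none = 1 ∧
  (∀ i, X none (some i) = x i) ∧
  (∀ i, X (some i) (some i) = x i) ∧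
  (∀ i, (X (some i) none, fun j => X (some i) (some j)) ∈ lsCone R) ∧
  (∀ i, (X none none - X (some i) none,
         fun j => X none (some j) - X (some i) (some j)) ∈ lsCone R)

/-- The Lovász–Schrijver `N` operator. -/
def lsN {ι : Type*} (R : Set (ι → ℝ)) : Set (ι → ℝ) :=
  {x | ∃ X : Option ι → Option ι → ℝ, IsProtection R x X}

/-- The Lovász–Schrijver `N₊` operator (protection matrix additionally PSD). -/
def lsNplus {ι : Type*} [Fintype ι] (R : Set (ι → ℝ)) : Set (ι → ℝ) :=
  {x | ∃ X : Matrix (Option ι) (Option ι) ℝ, X.PosSemidef ∧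
        IsProtection R x (fun i j => X i j)}

/-! ### Directed graphs -/

variable {V : Type*} [DecidableEq V]

/-- The list of (directed) steps of a walk given by its list of vertices. -/
def dSteps (l : List V) : List (V × V) := l.zip l.tail

/-- The steps of a closed walk given by its list of vertices. -/
def cycSteps (l : List V) : List (V × V) := l.zip (l.rotate 1)

/-- `l` is a directed walk from `u` to `v` using edges of `E`. -/
def IsDWalk (E : Finset (V × V)) (u v : V) (l : List V) : Prop :=
  l.head? = some u ∧ l.getLast? = some v ∧ ∀ a ∈ dSteps l, a ∈ E

/-- Total weight of a walk. -/
def dWalkWeight (w : V × V → ℝ) (l : List V) : ℝ := ((dSteps l).map w).sum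

/-- Shortest-path distance from `u` to `v` in the weighted directed graph `(E, w)`. -/
noncomputable def dDist (E : Finset (V × V)) (w : V × V → ℝ) (u v : V) : ℝ :=
  sInf {c | ∃ l : List V, IsDWalk E u v l ∧ dWalkWeight w l = c}

/-- `x(δ⁺(S))`. -/
def outCut (E : Finset (V × V)) (x : ↥E → ℝ) (S : Finset V) : ℝ :=
  ∑ e ∈ E.attach.filter (fun e => e.val.1 ∈ S ∧ e.val.2 ∉ S), x e

/-- `x(δ⁻(S))`. -/
def inCut (E : Finset (V × V)) (x : ↥E → ℝ) (S : Finset V) : ℝ :=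
  ∑ e ∈ E.attach.filter (fun e => e.val.1 ∉ S ∧ e.val.2 ∈ S), x e

/-- `d · x = ∑_e d_e x_e` over the edge set `E`. -/
def dDot (E : Finset (V × V)) (d : V × V → ℝ) (x : ↥E → ℝ) : ℝ :=
  ∑ e ∈ E.attach, d e.val * x e

/-- The balanced asymmetric tour polytope of the directed graph with node set `VS`
and edge set `E`. -/
def ATbal (VS : Finset V) (E : Finset (V × V)) : Set (↥E → ℝ) :=
  {x | (∀ e, 0 ≤ x e ∧ x e ≤ 1) ∧
       (∀ S : Finset V, S ⊆ VS → S.Nonempty → S ≠ VS →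
          1 ≤ outCut E x S ∧ 1 ≤ inCut E x S) ∧
       (∀ v ∈ VS, outCut E x {v} = inCut E x {v})}

/-- Indicator vectors of Hamiltonian cycles (on node set `VS`) among edges `E`. -/
def hamCycleVecs (VS : Finset V) (E : Finset (V × V)) : Set (↥E → ℝ) :=
  {x | ∃ c : List V, 2 ≤ c.length ∧ c.Nodup ∧ c.toFinset = VS ∧
        (∀ a ∈ cycSteps c, a ∈ E) ∧
        ∀ e : ↥E, x e = if e.val ∈ cycSteps c then 1 else 0}

/-- Edge set of the complete directed graph on the node set `VS` (no self-loops). -/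
def dComplete (VS : Finset V) : Finset (V × V) := (VS ×ˢ VS).filter (fun e => e.1 ≠ e.2)

/-- Edge set of the complete directed graph on all of `V` (no self-loops). -/
def dCompleteAll (V : Type*) [Fintype V] [DecidableEq V] : Finset (V × V) :=
  Finset.univ.filter (fun e => e.1 ≠ e.2)

/-- Out-degree of `v` in edge set `E`. -/
def outDeg (E : Finset (V × V)) (v : V) : ℕ := (E.filter (fun e => e.1 = v)).card

/-- In-degree of `v` in edge set `E`. -/
def inDeg (E : Finset (V × V)) (v : V) : ℕ := (E.filter (fun e => e.2 = v)).card

/-- A frame for the edge `e = (u,v)`: a set `F ⊆ E \ {e}` consisting of an edge-simple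
path from `u` to `v` together with zero or more edge-simple cycles, all pairwise
edge-disjoint. -/
def IsFrame (E : Finset (V × V)) (e : V × V) (F : Finset (V × V)) : Prop :=
  F ⊆ E.erase e ∧
  ∃ (p : List V) (cs : List (List V)),
    p.head? = some e.1 ∧ p.getLast? = some e.2 ∧ (∀ a ∈ dSteps p, a ∈ E) ∧
    (∀ c ∈ cs, c ≠ [] ∧ ∀ a ∈ cycSteps c, a ∈ E) ∧
    (dSteps p ++ (cs.map cycSteps).flatten).Nodup ∧
    F = (dSteps p ++ (cs.map cycSteps).flatten).toFinset

/-- There exist two edge-disjoint directed (simple) paths from `u` to `v` in `E`. -/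
def TwoEdgeDisjointPaths (E : Finset (V × V)) (u v : V) : Prop :=
  ∃ p q : List V, p.Nodup ∧ q.Nodup ∧
    p.head? = some u ∧ p.getLast? = some v ∧
    q.head? = some u ∧ q.getLast? = some v ∧
    (∀ a ∈ dSteps p, a ∈ E) ∧ (∀ a ∈ dSteps q, a ∈ E) ∧
    (dSteps p).Disjoint (dSteps q)




/-! ### The Charikar–Goemans–Karloff graphs -/

/-- Vertex type housing the graph `G_{k,r}` (index `k = 0` is a dummy level). -/
def CGKV : ℕ → Type
  | 0 => PUnit
  | 1 => ℕ
  | k + 2 => (ℕ × CGKV (k + 1)) ⊕ Fin 2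

instance CGKV.decEq : (k : ℕ) → DecidableEq (CGKV k)
  | 0 => inferInstanceAs (DecidableEq PUnit)
  | 1 => inferInstanceAs (DecidableEq ℕ)
  | k + 2 =>
      letI : DecidableEq (CGKV (k + 1)) := CGKV.decEq (k + 1)
      inferInstanceAs (DecidableEq ((ℕ × CGKV (k + 1)) ⊕ Fin 2))

/-- The source of `G_{k,r}`. -/
def CGKsrc (r : ℕ) : (k : ℕ) → CGKV k
  | 0 => PUnit.unit
  | 1 => (0 : ℕ)
  | _ + 2 => Sum.inr 0

/-- The sink of `G_{k,r}`. -/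
def CGKsnk (r : ℕ) : (k : ℕ) → CGKV k
  | 0 => PUnit.unit
  | 1 => (r + 1 : ℕ)
  | _ + 2 => Sum.inr 1

/-- The node set of `G_{k,r}`. -/
def CGKVS (r : ℕ) : (k : ℕ) → Finset (CGKV k)
  | 0 => ∅
  | 1 => Finset.range (r + 2)
  | k + 2 =>
      ((Finset.range r) ×ˢ CGKVS r (k + 1)).image Sum.inl ∪ {Sum.inr 0, Sum.inr 1}

/-- The edge set of `G_{k,r}`: at level 1, two oppositely-directed paths of `r+1` edges
on the nodes `0, …, r+1`; at level `k+2`, the edges of the `r` copies of `G_{k+1,r}`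
together with a path from the source `s` through the copies' sources to the sink `t`,
and a path from `t` through the copies' sinks (in the opposite order) back to `s`. -/
def CGKE (r : ℕ) : (k : ℕ) → Finset (CGKV k × CGKV k)
  | 0 => ∅
  | 1 => (dSteps (List.range (r + 2))).toFinset ∪
         (dSteps (List.range (r + 2)).reverse).toFinset
  | k + 2 =>
      (Finset.range r).biUnion
        (fun j => (CGKE r (k + 1)).image (fun e => (Sum.inl (j, e.1), Sum.inl (j, e.2)))) ∪
      (dSteps (Sum.inr 0 ::
        ((List.range r).map (fun j => Sum.inl (j, CGKsrc r (k + 1)))) ++ [Sum.inr 1])).toFinset ∪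
      (dSteps (Sum.inr 1 ::
        (((List.range r).map (fun j => Sum.inl (j, CGKsnk r (k + 1)))).reverse) ++ [Sum.inr 0])).toFinset

/-- Edge weights of `G_{k,r}` (and of `L_{k,r}`): level-`ℓ` edges have weight `r^(ℓ-1)`. -/
def CGKw (r : ℕ) : (k : ℕ) → CGKV k × CGKV k → ℝ
  | 0, _ => 0
  | 1, _ => 1
  | k + 2, e =>
      match e with
      | (Sum.inl (j, u), Sum.inl (j', v)) =>
          if j = j' then CGKw r (k + 1) (u, v) else (r : ℝ) ^ (k + 1)
      | _ => (r : ℝ) ^ (k + 1)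

/-- `v₁`: the successor of `s` on the forward path of `G_{k,r}`. -/
def Lv1 (r : ℕ) : (k : ℕ) → CGKV k
  | 0 => PUnit.unit
  | 1 => (1 : ℕ)
  | k + 2 => Sum.inl (0, CGKsrc r (k + 1))

/-- `v₂`: the predecessor of `t` on the forward path of `G_{k,r}`. -/
def Lv2 (r : ℕ) : (k : ℕ) → CGKV k
  | 0 => PUnit.unit
  | 1 => (r : ℕ)
  | k + 2 => Sum.inl (r - 1, CGKsrc r (k + 1))

/-- `v₃`: the successor of `t` on the backward path of `G_{k,r}`. -/
def Lv3 (r : ℕ) : (k : ℕ) → CGKV k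
  | 0 => PUnit.unit
  | 1 => (r : ℕ)
  | k + 2 => Sum.inl (r - 1, CGKsnk r (k + 1))

/-- `v₄`: the predecessor of `s` on the backward path of `G_{k,r}`. -/
def Lv4 (r : ℕ) : (k : ℕ) → CGKV k
  | 0 => PUnit.unit
  | 1 => (1 : ℕ)
  | k + 2 => Sum.inl (0, CGKsnk r (k + 1))

/-- The node set `V_{k,r}` of `L_{k,r}`: the nodes of `G_{k,r}` minus the two terminals. -/
def LVS (r k : ℕ) : Finset (CGKV k) :=
  ((CGKVS r k).erase (CGKsrc r k)).erase (CGKsnk r k)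

/-- The edge set `E_{k,r}` of `L_{k,r}`: the edges of `G_{k,r}` not incident to a terminal,
plus the two new edges `(v₂,v₁)` and `(v₄,v₃)`. -/
def LE (r k : ℕ) : Finset (CGKV k × CGKV k) :=
  (CGKE r k).filter (fun e =>
    e.1 ≠ CGKsrc r k ∧ e.1 ≠ CGKsnk r k ∧ e.2 ≠ CGKsrc r k ∧ e.2 ≠ CGKsnk r k) ∪
  {(Lv2 r k, Lv1 r k), (Lv4 r k, Lv3 r k)}



/-! ### Undirected graphs -/

variable {V : Type*} [DecidableEq V]

/-- The (undirected) steps of a walk given by its list of vertices. -/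
def uSteps (l : List V) : List (Sym2 V) := (l.zip l.tail).map (fun p => Sym2.mk p.1 p.2)

/-- `l` is a walk from `u` to `v` in the undirected edge set `E`. -/
def IsUWalk (E : Finset (Sym2 V)) (u v : V) (l : List V) : Prop :=
  l.head? = some u ∧ l.getLast? = some v ∧ ∀ e ∈ uSteps l, e ∈ E

/-- Whether the undirected edge `e` crosses the cut `(S, S̄)`. -/
def uCrosses (S : Finset V) (e : Sym2 V) : Bool :=
  Sym2.lift ⟨fun a b => xor (decide (a ∈ S)) (decide (b ∈ S)),
    fun a b => Bool.xor_comm _ _⟩ e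

/-- `x(δ(S))`. -/
def uCut (E : Finset (Sym2 V)) (x : ↥E → ℝ) (S : Finset V) : ℝ :=
  ∑ e ∈ E.attach.filter (fun e => uCrosses S e.val), x e

/-- `d · x = ∑_e d_e x_e` over the undirected edge set `E`. -/
def uDot (E : Finset (Sym2 V)) (d : Sym2 V → ℝ) (x : ↥E → ℝ) : ℝ :=
  ∑ e ∈ E.attach, d e.val * x e

/-- The symmetric tour polytope of the undirected graph with node set `VS`, edges `E`. -/
def STpoly (VS : Finset V) (E : Finset (Sym2 V)) : Set (↥E → ℝ) :=
  {x | (∀ e, 0 ≤ x e ∧ x e ≤ 1) ∧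
       (∀ S : Finset V, S ⊆ VS → S.Nonempty → S ≠ VS → 2 ≤ uCut E x S) ∧
       (∀ v ∈ VS, uCut E x {v} = 2)}

/-- The symmetric path polytope of the undirected graph with node set `VS`, edges `E`,
and endpoints `s`, `t`. -/
def SPpoly (VS : Finset V) (E : Finset (Sym2 V)) (s t : V) : Set (↥E → ℝ) :=
  {x | (∀ e, 0 ≤ x e ∧ x e ≤ 1) ∧
       (∀ S : Finset V, S ⊆ VS → S.Nonempty → S ≠ VS →
          (((s ∈ S) ↔ (t ∈ S)) → 2 ≤ uCut E x S) ∧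
          (¬((s ∈ S) ↔ (t ∈ S)) → 1 ≤ uCut E x S)) ∧
       (∀ v ∈ VS, v ≠ s → v ≠ t → uCut E x {v} = 2) ∧
       uCut E x {s} = 1 ∧ uCut E x {t} = 1}

/-- Indicator vectors of Hamiltonian paths from `s` to `t` (on node set `VS`) among
edges `E`. -/
def uHamPathVecs (VS : Finset V) (E : Finset (Sym2 V)) (s t : V) : Set (↥E → ℝ) :=
  {x | ∃ p : List V, p.Nodup ∧ p.toFinset = VS ∧
        p.head? = some s ∧ p.getLast? = some t ∧
        (∀ e ∈ uSteps p, e ∈ E) ∧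
        ∀ e : ↥E, x e = if e.val ∈ uSteps p then 1 else 0}

/-- Edge set of the complete undirected graph on all of `V` (no self-loops). -/
def uCompleteAll (V : Type*) [Fintype V] [DecidableEq V] : Finset (Sym2 V) :=
  Finset.univ.filter (fun e => ¬ e.IsDiag)

/-- Shortest-path distance (number of edges) between the endpoints of `e`, in the
unweighted undirected graph with edge set `E`. -/
noncomputable def uDist (E : Finset (Sym2 V)) (e : Sym2 V) : ℝ :=
  sInf {c | ∃ u v : V, e = s(u, v) ∧
    ∃ l : List V, IsUWalk E u v l ∧ ((uSteps l).length : ℝ) = c}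

/-! ### Cheung's graphs -/

/-- The node set `V_{ℓ,q}` of Cheung's graph `G_{ℓ,q}`: a top path and a bottom path of
`ℓ+1` nodes each, a left and a right clique of `3q+3` nodes each, and nodes `s`, `t`. -/
inductive ChV (l q : ℕ) where
  | top : Fin (l + 1) → ChV l q
  | bot : Fin (l + 1) → ChV l q
  | left : Fin (3 * q + 3) → ChV l q
  | right : Fin (3 * q + 3) → ChV l q
  | vs : ChV l q
  | vt : ChV l q
deriving DecidableEq, Fintype

/-- The edges of the two paths of `G_{ℓ,q}`. -/
def ChEpaths (l q : ℕ) : Finset (Sym2 (ChV l q)) :=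
  (Finset.univ : Finset (Fin l)).image
    (fun i => s(ChV.top i.castSucc, ChV.top i.succ)) ∪
  (Finset.univ : Finset (Fin l)).image
    (fun i => s(ChV.bot i.castSucc, ChV.bot i.succ))

/-- The edges within the two cliques of `G_{ℓ,q}`. -/
def ChEcliques (l q : ℕ) : Finset (Sym2 (ChV l q)) :=
  ((Finset.univ : Finset (Fin (3 * q + 3) × Fin (3 * q + 3))).filter
      (fun p => p.1 ≠ p.2)).image (fun p => s(ChV.left p.1, ChV.left p.2)) ∪
  ((Finset.univ : Finset (Fin (3 * q + 3) × Fin (3 * q + 3))).filter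
      (fun p => p.1 ≠ p.2)).image (fun p => s(ChV.right p.1, ChV.right p.2))

/-- The connection edges of `G_{ℓ,q}`: path endpoints to the cliques, `s` to the left
clique, and `t` to the right clique. -/
def ChEconn (l q : ℕ) : Finset (Sym2 (ChV l q)) :=
  (Finset.univ : Finset (Fin (3 * q + 3))).image (fun i => s(ChV.top 0, ChV.left i)) ∪
  (Finset.univ : Finset (Fin (3 * q + 3))).image (fun i => s(ChV.bot 0, ChV.left i)) ∪
  (Finset.univ : Finset (Fin (3 * q + 3))).image
    (fun i => s(ChV.top (Fin.last l), ChV.right i)) ∪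
  (Finset.univ : Finset (Fin (3 * q + 3))).image
    (fun i => s(ChV.bot (Fin.last l), ChV.right i)) ∪
  (Finset.univ : Finset (Fin (3 * q + 3))).image (fun i => s(ChV.vs, ChV.left i)) ∪
  (Finset.univ : Finset (Fin (3 * q + 3))).image (fun i => s(ChV.vt, ChV.right i))

/-- The edge set `E_{ℓ,q}` of Cheung's graph `G_{ℓ,q}`. -/
def ChE (l q : ℕ) : Finset (Sym2 (ChV l q)) :=
  ChEpaths l q ∪ ChEcliques l q ∪ ChEconn l q

/-- The node set of `G'_{ℓ,q}`: `G_{ℓ,q}` plus `ℓ-1` new internal path nodes. -/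
inductive ChV' (l q : ℕ) where
  | old : ChV l q → ChV' l q
  | mid : Fin (l - 1) → ChV' l q
deriving DecidableEq, Fintype

/-- The new `s`–`t` path of `G'_{ℓ,q}` (as a list of nodes; it has `ℓ` edges). -/
def ChPathList (l q : ℕ) : List (ChV' l q) :=
  ChV'.old ChV.vs :: ((List.finRange (l - 1)).map ChV'.mid ++ [ChV'.old ChV.vt])

/-- The edge set `E'_{ℓ,q}` of `G'_{ℓ,q}`: the (old) edges of `G_{ℓ,q}` together with the
`ℓ` new edges of a path from `s` to `t` through `ℓ-1` new nodes. -/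
def ChE' (l q : ℕ) : Finset (Sym2 (ChV' l q)) :=
  (ChE l q).image (Sym2.map ChV'.old) ∪ (uSteps (ChPathList l q)).toFinset

/-!
A cut `δ(S)` of `G_{ℓ,q}` with `S` not containing both `s` and `t` is, together with the edges
of the new `s`–`t` path that cross it, the cut `δ(S)` of `G'_{ℓ,q}`. Since the inner nodes of
that path lie outside `S`, it crosses `δ(S)` once if `S` separates `s` from `t` and not at all
otherwise, and each of its edges carries value `1`; so `x(δ(S)) = x'(δ(S)) - [S separates s, t]`.
Complementing `S` handles the sets containing both terminals, and the cut and degree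
constraints of `ST(G'_{ℓ,q})` become those of `SP(G_{ℓ,q}, s, t)`.
-/

section Cuts

variable {W : Type*}

lemma mem_of_mem_uSteps {p : List W} {e : Sym2 W} (he : e ∈ uSteps p) {v : W} (hv : v ∈ e) :
    v ∈ p := by
  obtain ⟨⟨u, w⟩, hm, rfl⟩ := List.mem_map.1 he
  rcases Sym2.mem_iff.1 hv with rfl | rfl
  · exact (List.of_mem_zip hm).1
  · exact List.mem_of_mem_tail (List.of_mem_zip hm).2

variable [DecidableEq W]

lemma uCrosses_mk_eq_true (S : Finset W) (u w : W) :
    uCrosses S s(u, w) = true ↔ ¬(u ∈ S ↔ w ∈ S) := by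
  by_cases hu : u ∈ S <;> by_cases hw : w ∈ S <;> simp [uCrosses, hu, hw]

lemma uCrosses_image_map {W' : Type*} [DecidableEq W'] {f : W → W'}
    (hf : Function.Injective f) (S : Finset W) (e : Sym2 W) :
    uCrosses (S.image f) (e.map f) = uCrosses S e := by
  induction e using Sym2.ind with
  | _ u w => simp [uCrosses, hf.eq_iff]

lemma uCut_compl [Fintype W] (E : Finset (Sym2 W)) (x : ↥E → ℝ) (S : Finset W) :
    uCut E x Sᶜ = uCut E x S := by
  unfold uCut
  congr 1
  refine Finset.filter_congr fun e _ => ?_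
  induction e.val using Sym2.ind with
  | _ u w => by_cases hu : u ∈ S <;> by_cases hw : w ∈ S <;> simp [uCrosses, hu, hw]

lemma uCut_eq_sum_filter (E : Finset (Sym2 W)) (x : ↥E → ℝ) {y : Sym2 W → ℝ}
    (hy : ∀ e : ↥E, y e = x e) (S : Finset W) :
    uCut E x S = ∑ e ∈ E.filter (fun e => uCrosses S e), y e := by
  rw [uCut, Finset.sum_filter, Finset.sum_filter, ← Finset.sum_attach E]
  exact Finset.sum_congr rfl fun e _ => by rw [hy]

lemma sum_filter_uCrosses_image {W' : Type*} [DecidableEq W'] {f : W → W'}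
    (hf : Function.Injective f) (E : Finset (Sym2 W)) (y : Sym2 W' → ℝ) (S : Finset W) :
    ∑ e ∈ (E.image (Sym2.map f)).filter (fun e => uCrosses (S.image f) e), y e =
      ∑ e ∈ E.filter (fun e => uCrosses S e), y (e.map f) := by
  rw [Finset.filter_image, Finset.sum_image (Sym2.map.injective hf).injOn]
  simp only [uCrosses_image_map hf]

lemma card_filter_uCrosses_uSteps (T : Finset W) (b : W) (ms : List W)
    (hms : ∀ v ∈ ms, v ∉ T) (a : W) (hab : a ∉ T ∨ b ∉ T) :
    ((uSteps (a :: (ms ++ [b]))).toFinset.filter (fun e => uCrosses T e)).card =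
      if (a ∈ T ↔ b ∈ T) then 0 else 1 := by
  induction ms generalizing a with
  | nil =>
    by_cases ha : a ∈ T <;> by_cases hb : b ∈ T <;>
      simp_all [uSteps, uCrosses, Finset.filter_singleton]
  | cons c ms ih =>
    have hc : c ∉ T := hms c List.mem_cons_self
    have hrest := ih (fun v hv => hms v (List.mem_cons_of_mem c hv)) c (Or.inl hc)
    rw [show uSteps (a :: (c :: ms ++ [b])) = s(a, c) :: uSteps (c :: (ms ++ [b])) from rfl,
      List.toFinset_cons, Finset.filter_insert]
    by_cases ha : a ∈ T
    · have hb : b ∉ T := hab.resolve_left (not_not.2 ha)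
      have hempty : (uSteps (c :: (ms ++ [b]))).toFinset.filter (fun e => uCrosses T e) = ∅ :=
        Finset.card_eq_zero.1 (by simp [hrest, hc, hb])
      rw [if_pos ((uCrosses_mk_eq_true T a c).2 (by tauto)), hempty]
      simp [ha, hb]
    · rw [if_neg (by rw [uCrosses_mk_eq_true]; tauto), hrest]
      simp [ha, hc]

lemma compl_nonempty_of_ne_univ {α : Type*} [Fintype α] [DecidableEq α] {S : Finset α}
    (hS : S ≠ Finset.univ) : Sᶜ.Nonempty :=
  Finset.nonempty_iff_ne_empty.2 (by rwa [Ne, Finset.compl_eq_empty_iff])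

end Cuts

section Cheung

variable {l q : ℕ}

lemma ChV'.old_injective : Function.Injective (ChV'.old : ChV l q → ChV' l q) :=
  fun _ _ h => ChV'.old.inj h

lemma ChV.vs_ne_vt : (ChV.vs : ChV l q) ≠ ChV.vt := by simp

lemma eq_terminal_of_old_mem_ChPathList {v : ChV l q} (hv : ChV'.old v ∈ ChPathList l q) :
    v = ChV.vs ∨ v = ChV.vt := by
  simpa [ChPathList, eq_comm] using hv

lemma s_not_mem_ChE_of_terminal {u w : ChV l q} (hu : u = ChV.vs ∨ u = ChV.vt)
    (hw : w = ChV.vs ∨ w = ChV.vt) : s(u, w) ∉ ChE l q := by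
  rcases hu with rfl | rfl <;> rcases hw with rfl | rfl <;>
    simp [ChE, ChEpaths, ChEcliques, ChEconn]

lemma disjoint_image_ChE_uSteps_ChPathList :
    Disjoint ((ChE l q).image (Sym2.map ChV'.old)) (uSteps (ChPathList l q)).toFinset := by
  rw [Finset.disjoint_left]
  rintro _ he hpath
  obtain ⟨e, heE, rfl⟩ := Finset.mem_image.1 he
  induction e using Sym2.ind with
  | _ u w =>
    have hp := List.mem_toFinset.1 hpath
    exact s_not_mem_ChE_of_terminal
      (eq_terminal_of_old_mem_ChPathList (mem_of_mem_uSteps hp (by simp)))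
      (eq_terminal_of_old_mem_ChPathList (mem_of_mem_uSteps hp (by simp))) heE

lemma uCut_ChE'_image {x : ↥(ChE l q) → ℝ} {x' : ↥(ChE' l q) → ℝ}
    (hagree : ∀ (e : ↥(ChE l q)) (e' : ↥(ChE' l q)),
      e'.val = Sym2.map ChV'.old e.val → x' e' = x e)
    (hnew : ∀ e' : ↥(ChE' l q),
      e'.val ∉ (ChE l q).image (Sym2.map ChV'.old) → x' e' = 1)
    (S : Finset (ChV l q)) (hS : ChV.vs ∉ S ∨ ChV.vt ∉ S) :
    uCut (ChE' l q) x' (S.image ChV'.old) =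
      uCut (ChE l q) x S + if (ChV.vs ∈ S ↔ ChV.vt ∈ S) then 0 else 1 := by
  set y : Sym2 (ChV' l q) → ℝ := fun e => if h : e ∈ ChE' l q then x' ⟨e, h⟩ else 0
  have hy : ∀ e : ↥(ChE' l q), y e = x' e := fun e => dif_pos e.2
  have hold : ∀ e : ↥(ChE l q), y (e.val.map ChV'.old) = x e := fun e =>
    (dif_pos (Finset.mem_union_left _ (Finset.mem_image_of_mem _ e.2))).trans
      (hagree _ _ rfl)
  have hpath : ∀ e ∈ (uSteps (ChPathList l q)).toFinset, y e = 1 := fun e he =>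
    (dif_pos (Finset.mem_union_right _ he)).trans
      (hnew _ (Finset.disjoint_right.1 disjoint_image_ChE_uSteps_ChPathList he))
  have hcross := card_filter_uCrosses_uSteps (S.image ChV'.old) (ChV'.old ChV.vt)
    ((List.finRange (l - 1)).map ChV'.mid) (by simp) (ChV'.old ChV.vs)
    (by simpa [ChV'.old_injective.mem_finset_image] using hS)
  simp only [ChV'.old_injective.mem_finset_image] at hcross
  rw [uCut_eq_sum_filter _ x' hy, ChE', Finset.filter_union,
    Finset.sum_union (Finset.disjoint_filter_filter disjoint_image_ChE_uSteps_ChPathList),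
    sum_filter_uCrosses_image ChV'.old_injective, ← uCut_eq_sum_filter _ x hold,
    Finset.sum_congr rfl fun e he => hpath e (Finset.mem_of_mem_filter e he),
    Finset.sum_const, nsmul_one, ChPathList, hcross]
  split_ifs <;> simp

variable {x : ↥(ChE l q) → ℝ} {x' : ↥(ChE' l q) → ℝ}

lemma two_le_uCut_ChE_add
    (hagree : ∀ (e : ↥(ChE l q)) (e' : ↥(ChE' l q)),
      e'.val = Sym2.map ChV'.old e.val → x' e' = x e)
    (hnew : ∀ e' : ↥(ChE' l q),
      e'.val ∉ (ChE l q).image (Sym2.map ChV'.old) → x' e' = 1)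
    (hx' : x' ∈ STpoly Finset.univ (ChE' l q)) {S : Finset (ChV l q)}
    (hne : S.Nonempty) (hS : S ≠ Finset.univ) :
    2 ≤ uCut (ChE l q) x S + if (ChV.vs ∈ S ↔ ChV.vt ∈ S) then 0 else 1 := by
  have himage : ∀ T : Finset (ChV l q), T.Nonempty → T ≠ Finset.univ →
      2 ≤ uCut (ChE' l q) x' (T.image ChV'.old) := fun T hT hT' => by
    obtain ⟨v, hv⟩ := compl_nonempty_of_ne_univ hT'
    refine hx'.2.1 _ (Finset.subset_univ _) (hT.image _) fun h => ?_
    exact Finset.mem_compl.1 hv (ChV'.old_injective.mem_finset_image.1 (h ▸ Finset.mem_univ _))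
  by_cases hst : ChV.vs ∉ S ∨ ChV.vt ∉ S
  · rw [← uCut_ChE'_image hagree hnew S hst]
    exact himage S hne hS
  · simp only [not_or, not_not] at hst
    have hcompl := uCut_ChE'_image hagree hnew Sᶜ (by simp [hst])
    rw [uCut_compl] at hcompl
    have := himage Sᶜ (compl_nonempty_of_ne_univ hS) ((Finset.compl_ne_univ_iff_nonempty S).2 hne)
    simp_all

lemma uCut_ChE_singleton
    (hagree : ∀ (e : ↥(ChE l q)) (e' : ↥(ChE' l q)),
      e'.val = Sym2.map ChV'.old e.val → x' e' = x e)
    (hnew : ∀ e' : ↥(ChE' l q),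
      e'.val ∉ (ChE l q).image (Sym2.map ChV'.old) → x' e' = 1)
    (hx' : x' ∈ STpoly Finset.univ (ChE' l q)) (v : ChV l q) :
    uCut (ChE l q) x {v} = 2 - if (v = ChV.vs ↔ v = ChV.vt) then 0 else 1 := by
  have hst : ChV.vs ∉ ({v} : Finset (ChV l q)) ∨ ChV.vt ∉ ({v} : Finset (ChV l q)) := by
    by_contra! h
    simp only [Finset.mem_singleton] at h
    exact ChV.vs_ne_vt (h.1.trans h.2.symm)
  have hcut := uCut_ChE'_image hagree hnew {v} hst
  rw [Finset.image_singleton, hx'.2.2 _ (Finset.mem_univ _)] at hcut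
  simp only [Finset.mem_singleton, eq_comm (a := v)] at hcut ⊢
  linarith

end Cheung

theorem stmt13_general (l q : ℕ)
    (x : ↥(ChE l q) → ℝ) (x' : ↥(ChE' l q) → ℝ)
    (hagree : ∀ (e : ↥(ChE l q)) (e' : ↥(ChE' l q)),
      e'.val = Sym2.map ChV'.old e.val → x' e' = x e)
    (hnew : ∀ e' : ↥(ChE' l q),
      e'.val ∉ (ChE l q).image (Sym2.map ChV'.old) → x' e' = 1)
    (hx' : x' ∈ STpoly Finset.univ (ChE' l q)) :
    x ∈ SPpoly Finset.univ (ChE l q) ChV.vs ChV.vt := by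
  have hdeg := uCut_ChE_singleton hagree hnew hx'
  refine ⟨fun e => ?_, fun S _ hne hS => ?_, fun v _ hs ht => ?_, ?_, ?_⟩
  · rw [← hagree e ⟨_, Finset.mem_union_left _ (Finset.mem_image_of_mem _ e.2)⟩ rfl]
    exact hx'.1 _
  · have := two_le_uCut_ChE_add hagree hnew hx' hne hS
    constructor <;> intro h <;> simp only [h, if_true, if_false] at this <;> linarith
  · simp [hdeg, hs, ht]
  · norm_num [hdeg, ChV.vs_ne_vt]
  · norm_num [hdeg, ChV.vs_ne_vt.symm]

theorem stmt13 (l q : ℕ) (hl : 1 ≤ l)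
    (x : ↥(ChE l q) → ℝ) (x' : ↥(ChE' l q) → ℝ)
    (hagree : ∀ (e : ↥(ChE l q)) (e' : ↥(ChE' l q)),
      e'.val = Sym2.map ChV'.old e.val → x' e' = x e)
    (hnew : ∀ e' : ↥(ChE' l q),
      e'.val ∉ (ChE l q).image (Sym2.map ChV'.old) → x' e' = 1)
    (hx' : x' ∈ STpoly Finset.univ (ChE' l q)) :
    x ∈ SPpoly Finset.univ (ChE l q) ChV.vs ChV.vt :=
  stmt13_general l q x x' hagree hnew hx'

end TSPGap
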